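/- Let α < 0, k ≥ 2, and let (Π̄_t), (Q̄_t) be sequences of probability distributions on {1,…,k} with Π̄_t(1) → 1 and D_α(Π̄_t, Q̄_t) < ε for all t, where D_α(P,Q) = (∑_i P(i)^α Q(i)^{1−α} − 1)/(α(α−1)). Then Q̄_t(1) → 1. -/

import Mathlib

/-!
For `α < 0` the summand `P(i)^α Q(i)^(1-α)` of the divergence blows up when `P(i) → 0` while
`Q(i)` stays away from `0`. A bound `D_α(P, Q) < ε` bounds every summand by a constant `C`, which
turns into `Q(i) ≤ (C P(i)^(-α))^(1/(1-α))`. Since `P_t(i) → 0` for every `i ≠ 1`, the same holds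
for `Q_t(i)`, and so `Q_t(1) → 1`.
-/

open Filter Topology

theorem Real.rpow_one_sub_le_mul_rpow_neg {p q α C : ℝ} (hp : 0 ≤ p) (hα : α < 0)
    (habs : p = 0 → q = 0) (h : p ^ α * q ^ (1 - α) ≤ C) : q ^ (1 - α) ≤ C * p ^ (-α) := by
  rcases hp.eq_or_lt with rfl | hp
  · rw [habs rfl, Real.zero_rpow (by linarith), Real.zero_rpow (by linarith), mul_zero]
  · have hpα : 0 < p ^ (-α) := Real.rpow_pos_of_pos hp _
    calc q ^ (1 - α) = p ^ (-α) * (p ^ α * q ^ (1 - α)) := by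
          rw [Real.rpow_neg hp.le, inv_mul_cancel_left₀ (Real.rpow_pos_of_pos hp α).ne']
      _ ≤ p ^ (-α) * C := mul_le_mul_of_nonneg_left h hpα.le
      _ = C * p ^ (-α) := mul_comm _ _

theorem tendsto_nhds_zero_of_rpow_mul_rpow_le {ι : Type*} {l : Filter ι} {p q : ι → ℝ}
    {α C : ℝ} (hα : α < 0) (hp0 : ∀ t, 0 ≤ p t) (hq0 : ∀ t, 0 ≤ q t)
    (habs : ∀ t, p t = 0 → q t = 0) (hC : ∀ t, p t ^ α * q t ^ (1 - α) ≤ C)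
    (hp : Tendsto p l (𝓝 0)) : Tendsto q l (𝓝 0) := by
  have h1α : 0 < 1 - α := by linarith
  have hbound (t : ι) : q t ≤ (C * p t ^ (-α)) ^ (1 - α)⁻¹ := by
    have hq := Real.rpow_one_sub_le_mul_rpow_neg (hp0 t) hα (habs t) (hC t)
    exact (Real.le_rpow_inv_iff_of_pos (hq0 t)
      ((Real.rpow_nonneg (hq0 t) _).trans hq) h1α).2 hq
  have hlim : Tendsto (fun t => (C * p t ^ (-α)) ^ (1 - α)⁻¹) l (𝓝 0) := by
    have := ((hp.rpow_const (Or.inr (neg_nonneg.2 hα.le))).const_mul C).rpow_const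
      (p := (1 - α)⁻¹) (Or.inr (inv_nonneg.2 h1α.le))
    rwa [Real.zero_rpow (by linarith), mul_zero, Real.zero_rpow (inv_ne_zero h1α.ne')] at this
  exact tendsto_of_tendsto_of_tendsto_of_le_of_le tendsto_const_nhds hlim hq0 hbound

section ProbabilityVector

variable {ι β : Type*} [Fintype ι] {l : Filter β} {p : β → ι → ℝ} {i₀ : ι}

theorem tendsto_apply_nhds_zero_of_tendsto_apply_nhds_one (hp0 : ∀ t i, 0 ≤ p t i)
    (hsum : ∀ t, ∑ i, p t i = 1) (h : Tendsto (fun t => p t i₀) l (𝓝 1)) {i : ι}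
    (hi : i ≠ i₀) : Tendsto (fun t => p t i) l (𝓝 0) := by
  have hbound (t : β) : p t i ≤ 1 - p t i₀ := by
    have := Finset.add_le_sum (fun j _ => hp0 t j) (Finset.mem_univ i) (Finset.mem_univ i₀) hi
    linarith [hsum t]
  have hlim : Tendsto (fun t => 1 - p t i₀) l (𝓝 0) := by
    simpa using (tendsto_const_nhds (x := (1 : ℝ))).sub h
  exact tendsto_of_tendsto_of_tendsto_of_le_of_le tendsto_const_nhds hlim (hp0 · i) hbound

theorem tendsto_apply_nhds_one_of_forall_ne [DecidableEq ι] (hsum : ∀ t, ∑ i, p t i = 1)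
    (h : ∀ i ≠ i₀, Tendsto (fun t => p t i) l (𝓝 0)) :
    Tendsto (fun t => p t i₀) l (𝓝 1) := by
  have hrest : Tendsto (fun t => ∑ i ∈ Finset.univ.erase i₀, p t i) l (𝓝 0) := by
    simpa only [Finset.sum_const_zero] using
      tendsto_finsetSum (Finset.univ.erase i₀) fun i hi => h i (Finset.ne_of_mem_erase hi)
  have heq (t : β) : p t i₀ = 1 - ∑ i ∈ Finset.univ.erase i₀, p t i := by
    rw [← hsum t, ← Finset.add_sum_erase _ _ (Finset.mem_univ i₀), add_sub_cancel_right]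
  simpa only [heq, sub_zero] using (tendsto_const_nhds (x := (1 : ℝ))).sub hrest

end ProbabilityVector

theorem neg_alpha_divergence_concentration_transfer
    (k : ℕ) (hk : 2 ≤ k) (α ε : ℝ) (hα : α < 0)
    (P Q : ℕ → Fin k → ℝ)
    (hP0 : ∀ t i, 0 ≤ P t i) (hQ0 : ∀ t i, 0 ≤ Q t i)
    (hPsum : ∀ t, ∑ i, P t i = 1) (hQsum : ∀ t, ∑ i, Q t i = 1)
    (hPlim : Filter.Tendsto (fun t => P t ⟨0, by omega⟩) Filter.atTop (nhds 1))
    (habs : ∀ t i, P t i = 0 → Q t i = 0)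
    (hD : ∀ t, ((∑ i, P t i ^ α * Q t i ^ (1 - α)) - 1) / (α * (α - 1)) < ε) :
    Filter.Tendsto (fun t => Q t ⟨0, by omega⟩) Filter.atTop (nhds 1) := by
  have hαα : 0 < α * (α - 1) := mul_pos_of_neg_of_neg hα (by linarith)
  have hterm (t : ℕ) (i : Fin k) :
      P t i ^ α * Q t i ^ (1 - α) ≤ ε * (α * (α - 1)) + 1 := by
    have hsum := Finset.single_le_sum (fun j _ => mul_nonneg (Real.rpow_nonneg (hP0 t j) α)
      (Real.rpow_nonneg (hQ0 t j) (1 - α))) (Finset.mem_univ i)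
    have := (div_lt_iff₀ hαα).1 (hD t)
    linarith
  refine tendsto_apply_nhds_one_of_forall_ne hQsum fun i hi => ?_
  exact tendsto_nhds_zero_of_rpow_mul_rpow_le hα (hP0 · i) (hQ0 · i) (habs · i) (hterm · i)
    (tendsto_apply_nhds_zero_of_tendsto_apply_nhds_one hP0 hPsum hPlim hi)
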